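/- arXiv:1404.4829 — 2 statements merged into one kernel-verified Lean document; each statement's English description precedes it below -/
import Mathlib

section
/- Let h > 0 and let f : ℝ≥0 → ℝ be continuous with f(0) = 0. Then the two-sided Skorohod reflections of f and of its one-sided reflection Γ⁰(f) on [0,h] coincide: Λ_{0,h}(f) = Λ_{0,h}(Γ⁰(f)), and the upper compensators agree: cʰ(Γ⁰(f)) = cʰ(f). -/
open Set
open scoped NNReal ENNReal

/-- Solution data for the two-sided Skorohod reflection problem of `f` on `[0,h]`:
`c0` and `ch` are the compensators at `0` and at `h`,
and `fun t => f t + ch t + c0 t` is the reflected path `Λ_{0,h}(f)`.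
The support conditions on the measures `dc⁰` and `d(−cʰ)` are phrased as:
the compensator is constant on every (closed) interval on which the reflected
path avoids the corresponding boundary. -/
structure SkorohodPair (h : ℝ) (f c0 ch : ℝ≥0 → ℝ) : Prop where
  cont0 : Continuous c0
  conth : Continuous ch
  init0 : c0 0 = 0
  inith : ch 0 = 0
  mem_Icc : ∀ t, f t + ch t + c0 t ∈ Set.Icc (0 : ℝ) h
  mono0 : Monotone c0
  antih : Antitone ch
  flat0 : ∀ a b : ℝ≥0, a ≤ b → (∀ t ∈ Set.Icc a b, f t + ch t + c0 t ≠ 0) → c0 b = c0 a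
  flath : ∀ a b : ℝ≥0, a ≤ b → (∀ t ∈ Set.Icc a b, f t + ch t + c0 t ≠ h) → ch b = ch a

/-- The one-sided Skorohod reflection of `f` at level `0` (upward push):
`Γ⁰(f)(t) = f t − min (inf_{[0,t]} f) 0`. -/
noncomputable def gammaUp (f : ℝ≥0 → ℝ) (t : ℝ≥0) : ℝ :=
  f t - min (sInf (f '' Set.Icc 0 t)) 0

/-!
If `(d⁰, dʰ)` solves the Skorohod problem for `Γ⁰(f) = f + c⁰(f)`, then `(d⁰ + c⁰(f), dʰ)` solves
it for `f`: the two problems share the reflected path, and `c⁰(f)` grows only at times where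
`Γ⁰(f) = 0`, where the reflection of the nonnegative path `Γ⁰(f)` vanishes too since
`dʰ + d⁰ ≤ 0`. Both claims then follow from uniqueness of the two-sided Skorohod problem. That
uniqueness is shown without Stieltjes integrals: a continuous `D` with `D 0 ≤ 0` stays
nonpositive as soon as it cannot increase across any interval on which it is positive.
-/

section OrderPrinciples

variable {α : Type*} [ConditionallyCompleteLinearOrderBot α] [TopologicalSpace α] [OrderTopology α]

theorem nonpos_of_forall_pos_exists_lt_le {D : α → ℝ} (hD : Continuous D)
    (H : ∀ s, 0 < D s → ∃ r < s, D s ≤ D r) (t : α) : D t ≤ 0 := by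
  by_contra! ht
  set S := {u | D t ≤ D u}
  have hS : sInf S ∈ S := (isClosed_le continuous_const hD).csInf_mem ⟨t, le_rfl (a := D t)⟩
    (OrderBot.bddBelow S)
  obtain ⟨r, hr, hle⟩ := H _ (ht.trans_le hS)
  exact hr.not_ge (csInf_le (OrderBot.bddBelow S) (hS.trans hle))

theorem nonpos_of_forall_Ioc_pos_le {D : α → ℝ} (hD : Continuous D) (hD0 : D ⊥ ≤ 0)
    (H : ∀ r s, r < s → (∀ u ∈ Ioc r s, 0 < D u) → D s ≤ D r) (t : α) : D t ≤ 0 := by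
  refine nonpos_of_forall_pos_exists_lt_le hD (fun s hs => ?_) t
  have hs0 : ⊥ < s := bot_lt_iff_ne_bot.2 fun hbot => by subst hbot; linarith
  obtain ⟨r, hr, hpos⟩ :=
    exists_Ioc_subset_of_mem_nhds (hD.continuousAt.eventually_const_lt hs) ⟨⊥, hs0⟩
  exact ⟨r, hr, H r s hr hpos⟩

theorem Continuous.eq_of_forall_Ioc_eq [DenselyOrdered α] {β : Type*} [TopologicalSpace β]
    [T2Space β] {F : α → β} (hF : Continuous F) {a b : α} (hab : a ≤ b)
    (hconst : ∀ t ∈ Ioc a b, F t = F b) : F a = F b := by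
  rcases hab.eq_or_lt with rfl | hlt
  · rfl
  have hcl := (isClosed_eq hF continuous_const).closure_subset_iff.2 hconst
  rw [closure_Ioc hlt.ne] at hcl
  exact hcl ⟨le_rfl, hlt.le⟩

end OrderPrinciples

namespace SkorohodPair

variable {h : ℝ} {f c0 ch c0' ch' : ℝ≥0 → ℝ}

theorem c0_eq_of_forall_Ioc_ne (hp : SkorohodPair h f c0 ch) {a b : ℝ≥0} (hab : a ≤ b)
    (hne : ∀ u ∈ Ioc a b, f u + ch u + c0 u ≠ 0) : c0 a = c0 b :=
  hp.cont0.eq_of_forall_Ioc_eq hab fun t ht =>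
    (hp.flat0 t b ht.2 fun u hu => hne u ⟨ht.1.trans_le hu.1, hu.2⟩).symm

theorem ch_eq_of_forall_Ioc_ne (hp : SkorohodPair h f c0 ch) {a b : ℝ≥0} (hab : a ≤ b)
    (hne : ∀ u ∈ Ioc a b, f u + ch u + c0 u ≠ h) : ch a = ch b :=
  hp.conth.eq_of_forall_Ioc_eq hab fun t ht =>
    (hp.flath t b ht.2 fun u hu => hne u ⟨ht.1.trans_le hu.1, hu.2⟩).symm

theorem ch_add_c0_nonpos (hp : SkorohodPair h f c0 ch) (hf : ∀ t, 0 ≤ f t) (t : ℝ≥0) :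
    ch t + c0 t ≤ 0 := by
  refine nonpos_of_forall_Ioc_pos_le (D := fun u => ch u + c0 u) (hp.conth.add hp.cont0)
    (by simp [hp.inith, hp.init0]) (fun r s hrs hpos => ?_) t
  have hc0 : c0 r = c0 s := hp.c0_eq_of_forall_Ioc_ne hrs.le fun u hu => by
    have := hpos u hu; have := hf u; linarith
  linarith [hp.antih hrs.le]

theorem ch_add_c0_le (hp : SkorohodPair h f c0 ch) (hq : SkorohodPair h f c0' ch') (t : ℝ≥0) :
    ch t + c0 t ≤ ch' t + c0' t := by
  refine sub_nonpos.1 (nonpos_of_forall_Ioc_pos_le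
    (D := fun u => ch u + c0 u - (ch' u + c0' u))
    ((hp.conth.add hp.cont0).sub (hq.conth.add hq.cont0))
    (by simp [hp.inith, hp.init0, hq.inith, hq.init0]) (fun r s hrs hpos => ?_) t)
  have hc0 : c0 r = c0 s := hp.c0_eq_of_forall_Ioc_ne hrs.le fun u hu => by
    have := hpos u hu; have := (hq.mem_Icc u).1; linarith
  have hch' : ch' r = ch' s := hq.ch_eq_of_forall_Ioc_ne hrs.le fun u hu => by
    have := hpos u hu; have := (hp.mem_Icc u).2; linarith
  linarith [hp.antih hrs.le, hq.mono0 hrs.le]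

theorem ch_add_c0_eq (hp : SkorohodPair h f c0 ch) (hq : SkorohodPair h f c0' ch') (t : ℝ≥0) :
    ch t + c0 t = ch' t + c0' t :=
  (hp.ch_add_c0_le hq t).antisymm (hq.ch_add_c0_le hp t)

/-- Near any time `s > 0` the common reflected path avoids `0` or `h`; there both compensators
at that boundary are constant, and `ch - ch' = c0' - c0`, so `ch - ch'` takes its value at `s`
earlier. -/
theorem ch_le (hh : 0 < h) (hf : Continuous f) (hp : SkorohodPair h f c0 ch)
    (hq : SkorohodPair h f c0' ch') (t : ℝ≥0) : ch t ≤ ch' t := by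
  have hX : Continuous fun u => f u + ch u + c0 u := (hf.add hp.conth).add hp.cont0
  have hXq : ∀ u, f u + ch' u + c0' u = f u + ch u + c0 u := fun u => by
    linarith [hp.ch_add_c0_eq hq u]
  refine sub_nonpos.1 (nonpos_of_forall_pos_exists_lt_le (D := fun u => ch u - ch' u)
    (hp.conth.sub hq.conth) (fun s hs => ?_) t)
  have hs0 : 0 < s := pos_iff_ne_zero.2 fun h0 => by
    subst h0; simp [hp.inith, hq.inith] at hs
  by_cases hX0 : f s + ch s + c0 s = 0
  · obtain ⟨r, hr, hne⟩ := exists_Ioc_subset_of_mem_nhds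
      (hX.continuousAt.eventually_ne (hX0.trans_ne hh.ne)) ⟨0, hs0⟩
    have hch : ch r = ch s := hp.ch_eq_of_forall_Ioc_ne hr.le hne
    have hch' : ch' r = ch' s := hq.ch_eq_of_forall_Ioc_ne hr.le fun u hu => hXq u ▸ hne hu
    exact ⟨r, hr, by rw [hch, hch']⟩
  · obtain ⟨r, hr, hne⟩ := exists_Ioc_subset_of_mem_nhds
      (hX.continuousAt.eventually_ne hX0) ⟨0, hs0⟩
    have hc0 : c0 r = c0 s := hp.c0_eq_of_forall_Ioc_ne hr.le hne
    have hc0' : c0' r = c0' s := hq.c0_eq_of_forall_Ioc_ne hr.le fun u hu => hXq u ▸ hne hu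
    exact ⟨r, hr, by linarith [hp.ch_add_c0_eq hq r, hp.ch_add_c0_eq hq s]⟩

theorem ch_eq (hh : 0 < h) (hf : Continuous f) (hp : SkorohodPair h f c0 ch)
    (hq : SkorohodPair h f c0' ch') : ch = ch' :=
  funext fun t => (hp.ch_le hh hf hq t).antisymm (hq.ch_le hh hf hp t)

end SkorohodPair

/-- The compensator `c⁰(f)` of the one-sided reflection `Γ⁰(f) = gammaUp f`. -/
noncomputable def gammaUpCompensator (f : ℝ≥0 → ℝ) (t : ℝ≥0) : ℝ :=
  -min (sInf (f '' Icc 0 t)) 0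

section OneSided

variable {f : ℝ≥0 → ℝ}

theorem gammaUp_eq_add (f : ℝ≥0 → ℝ) (t : ℝ≥0) : gammaUp f t = f t + gammaUpCompensator f t :=
  sub_eq_add_neg _ _

theorem gammaUp_nonneg (hf : Continuous f) (t : ℝ≥0) : 0 ≤ gammaUp f t := by
  rw [gammaUp, sub_nonneg]
  exact (min_le_left _ _).trans
    (csInf_le (isCompact_Icc.image hf).bddBelow (mem_image_of_mem f ⟨zero_le, le_rfl⟩))

theorem gammaUpCompensator_zero (hf0 : 0 ≤ f 0) : gammaUpCompensator f 0 = 0 := by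
  simp [gammaUpCompensator, hf0]

theorem gammaUpCompensator_monotone (hf : Continuous f) : Monotone (gammaUpCompensator f) :=
  fun s _ hst => neg_le_neg (min_le_min (csInf_le_csInf (isCompact_Icc.image hf).bddBelow
    ((nonempty_Icc.2 (zero_le : 0 ≤ s)).image f) (image_mono (Icc_subset_Icc le_rfl hst))) le_rfl)

theorem gammaUpCompensator_continuous (hf : Continuous f) : Continuous (gammaUpCompensator f) := by
  have hscale : gammaUpCompensator f = fun t => -min (sInf ((fun s => f (s * t)) '' Icc 0 1)) 0 :=
    funext fun t => by
      rw [gammaUpCompensator, ← image_image f (· * t),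
        image_mul_right_Icc zero_le_one (zero_le : 0 ≤ t), zero_mul, one_mul]
  rw [hscale]
  exact ((isCompact_Icc.continuous_sInf (hf.comp (continuous_snd.mul continuous_fst))).min
    continuous_const).neg

/-- The compensator only grows at times where the minimum of `f` so far is attained,
and `gammaUp f` vanishes there. -/
theorem gammaUpCompensator_eq_of_forall_ne (hf : Continuous f) {a b : ℝ≥0} (hab : a ≤ b)
    (hne : ∀ u ∈ Icc a b, gammaUp f u ≠ 0) : gammaUpCompensator f b = gammaUpCompensator f a := by
  by_contra hC
  have hlt := (gammaUpCompensator_monotone hf hab).lt_of_ne' hC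
  obtain ⟨u, hu, humin⟩ :=
    isCompact_Icc.exists_isMinOn (nonempty_Icc.2 (zero_le : 0 ≤ b)) hf.continuousOn
  have hCb : gammaUpCompensator f b = -min (f u) 0 := by
    rw [gammaUpCompensator,
      IsLeast.csInf_eq ⟨mem_image_of_mem f hu, forall_mem_image.2 fun x hx => humin hx⟩]
  have hau : a < u := by
    by_contra! hua
    have hinf_le := csInf_le (isCompact_Icc.image hf).bddBelow
      (mem_image_of_mem f (⟨zero_le, hua⟩ : u ∈ Icc 0 a))
    have : gammaUpCompensator f b ≤ gammaUpCompensator f a :=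
      hCb ▸ neg_le_neg (min_le_min hinf_le le_rfl)
    exact this.not_gt hlt
  have hfu : f u < 0 := by
    have hCa : 0 ≤ gammaUpCompensator f a := neg_nonneg.2 (min_le_right _ _)
    have hpos : 0 < -min (f u) 0 := hCb ▸ hCa.trans_lt hlt
    simpa using hpos
  have hCu := gammaUpCompensator_monotone hf hu.2
  rw [hCb, min_eq_left hfu.le] at hCu
  refine hne u ⟨hau.le, hu.2⟩ (le_antisymm ?_ (gammaUp_nonneg hf u))
  rw [gammaUp_eq_add]
  linarith

end OneSided

theorem SkorohodPair.of_gammaUp {h : ℝ} {f d0 dh : ℝ≥0 → ℝ} (hf : Continuous f) (hf0 : 0 ≤ f 0)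
    (hq : SkorohodPair h (gammaUp f) d0 dh) :
    SkorohodPair h f (d0 + gammaUpCompensator f) dh := by
  have hY : ∀ t, f t + dh t + (d0 + gammaUpCompensator f) t = gammaUp f t + dh t + d0 t :=
    fun t => by rw [gammaUp_eq_add, Pi.add_apply]; ring
  have hsum := hq.ch_add_c0_nonpos (gammaUp_nonneg hf)
  exact
    { cont0 := hq.cont0.add (gammaUpCompensator_continuous hf)
      conth := hq.conth
      init0 := by simp [hq.init0, gammaUpCompensator_zero hf0]
      inith := hq.inith
      mem_Icc := fun t => hY t ▸ hq.mem_Icc t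
      mono0 := hq.mono0.add (gammaUpCompensator_monotone hf)
      antih := hq.antih
      flat0 := fun a b hab hne => by
        have hne' : ∀ u ∈ Icc a b, gammaUp f u + dh u + d0 u ≠ 0 := fun u hu => hY u ▸ hne u hu
        have hC := gammaUpCompensator_eq_of_forall_ne hf hab fun u hu hu0 =>
          hne' u hu (le_antisymm (by linarith [hsum u]) (hq.mem_Icc u).1)
        simp only [Pi.add_apply, hq.flat0 a b hab hne', hC]
      flath := fun a b hab hne => hq.flath a b hab fun u hu => hY u ▸ hne u hu }

theorem skorohod_of_one_sided_reflection_general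
    (h : ℝ) (hh : 0 < h) (f : ℝ≥0 → ℝ) (hf : Continuous f)
    (c0 ch d0 dh : ℝ≥0 → ℝ)
    (hp : SkorohodPair h f c0 ch)
    (hq : SkorohodPair h (gammaUp f) d0 dh) :
    (∀ t, f t + ch t + c0 t = gammaUp f t + dh t + d0 t) ∧ dh = ch := by
  have hf0 : 0 ≤ f 0 := by simpa [hp.inith, hp.init0] using (hp.mem_Icc 0).1
  have hr := hq.of_gammaUp hf hf0
  refine ⟨fun t => ?_, (hp.ch_eq hh hf hr).symm⟩
  have hsum := hp.ch_add_c0_eq hr t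
  rw [Pi.add_apply] at hsum
  rw [gammaUp_eq_add]
  linarith

/-- **Reflection invariance** (Lemma `reflection-inv`): the two-sided Skorohod reflections on
`[0,h]` of `f` and of its one-sided reflection `Γ⁰(f)` coincide, and the upper compensators
agree: `cʰ(Γ⁰(f)) = cʰ(f)`.  Here `(c0, ch)` are the compensators of `f` and `(d0, dh)` those
of `Γ⁰(f)`. -/
theorem skorohod_of_one_sided_reflection
    (h : ℝ) (hh : 0 < h) (f : ℝ≥0 → ℝ) (hf : Continuous f) (hf0 : f 0 = 0)
    (c0 ch d0 dh : ℝ≥0 → ℝ)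
    (hp : SkorohodPair h f c0 ch)
    (hq : SkorohodPair h (gammaUp f) d0 dh) :
    (∀ t, f t + ch t + c0 t = gammaUp f t + dh t + d0 t) ∧ dh = ch :=
  skorohod_of_one_sided_reflection_general h hh f hf c0 ch d0 dh hp hq
end

section
/- Let f : ℝ≥0 → ℝ≥0 be continuous with f(0) = 0, and for t ≥ 0 define f^{(t)}(s) = f(s) for s ≤ t and f^{(t)}(s) = max(f(t) − (s − t), 0) for s > t. Then the real tree T_{f^{(t)}} coded by f^{(t)} is isometric, via a root-preserving isometry, to the subtree T_f^{(t)} := {p_f(s) : s ≤ t} of the real tree T_f coded by f (with the induced metric). -/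
open Set
open scoped NNReal

/-- The pseudo-distance `d_f(s,t) = f s + f t − 2 inf_{[s∧t, s∨t]} f` on times; the real
tree `T_f` coded by `f` is the quotient of `ℝ≥0` by `d_f = 0`, with projection `p_f` and
root `p_f 0`. -/
noncomputable def treeDist (f : ℝ≥0 → ℝ) (s t : ℝ≥0) : ℝ :=
  f s + f t - 2 * sInf (f '' Set.Icc (min s t) (max s t))

/-- `ancT f a b` means `p_f a ⪯ p_f b` in the tree coded by `f`, i.e.
`inf_{[a∧b, a∨b]} f = f a`. -/
def ancT (f : ℝ≥0 → ℝ) (a b : ℝ≥0) : Prop :=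
  sInf (f '' Set.Icc (min a b) (max a b)) = f a

/-- `p_f t` belongs to the `h`-trimming `Tr^h(T_f)`, i.e.
`sup { d_f(p_f t, y) : y ⪰ p_f t } ≥ h`. -/
def TrimTime (h : ℝ) (f : ℝ≥0 → ℝ) (t : ℝ≥0) : Prop :=
  h ≤ sSup ((fun s => treeDist f t s) '' {s | ancT f t s})

/-- The path `f^{(t)}`: it follows `f` up to time `t` and then decreases at unit speed to `0`. -/
noncomputable def stopCut (f : ℝ≥0 → ℝ) (t : ℝ≥0) (s : ℝ≥0) : ℝ :=
  if s ≤ t then f s else max (f t - ((s : ℝ) - (t : ℝ))) 0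

/-!
The isometry `φ` is the identity on times `s ≤ t`. A time `s > t` lies on the final descent
of `f^{(t)}`, at height `h = f^{(t)}(s) ∈ [0, f t]`; `φ` sends it to the last time `r ≤ t`
with `f r = h`, which codes the ancestor of `p_f t` at height `h` (it exists by the
intermediate value theorem, since `f 0 = 0`). Since `f > h` on `(r, t]`, the infima of `f`
between images of times are those of `f^{(t)}` between the times themselves, so `d_f` and
`d_{f^{(t)}}` agree.
-/

section IntervalInf

variable {α : Type*} [LinearOrder α] {f : α → ℝ} {a b c x : α}

lemma csInf_image_Icc_le (hf : BddBelow (range f)) (hx : x ∈ Icc a b) :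
    sInf (f '' Icc a b) ≤ f x :=
  csInf_le (hf.mono (image_subset_range f _)) (mem_image_of_mem f hx)

lemma le_csInf_image_Icc {y : ℝ} (hab : a ≤ b) (h : ∀ x ∈ Icc a b, y ≤ f x) :
    y ≤ sInf (f '' Icc a b) :=
  le_csInf ((nonempty_Icc.2 hab).image f) (forall_mem_image.2 h)

lemma csInf_image_Icc_eq_of_isMinOn (hx : x ∈ Icc a b) (h : IsMinOn f (Icc a b) x) :
    sInf (f '' Icc a b) = f x :=
  IsLeast.csInf_eq ⟨mem_image_of_mem f hx, forall_mem_image.2 h⟩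

lemma csInf_image_Icc_union (hf : BddBelow (range f)) (hab : a ≤ b) (hbc : b ≤ c) :
    sInf (f '' Icc a c) = min (sInf (f '' Icc a b)) (sInf (f '' Icc b c)) := by
  rw [← Icc_union_Icc_eq_Icc hab hbc, image_union,
    csInf_union (hf.mono (image_subset_range f _)) ((nonempty_Icc.2 hab).image f)
      (hf.mono (image_subset_range f _)) ((nonempty_Icc.2 hbc).image f)]

end IntervalInf

lemma treeDist_comm (f : ℝ≥0 → ℝ) (s u : ℝ≥0) : treeDist f s u = treeDist f u s := by
  unfold treeDist
  rw [min_comm, max_comm]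
  ring

lemma treeDist_self (f : ℝ≥0 → ℝ) (u : ℝ≥0) : treeDist f u u = 0 := by
  unfold treeDist
  rw [min_self, max_self, Icc_self, image_singleton, csInf_singleton]
  ring

section AncestorTime

variable {f : ℝ≥0 → ℝ} {t r x : ℝ≥0} {a : ℝ}

/-- For `0 ≤ a ≤ f t`, the time coding the ancestor of `p_f t` at height `a`. -/
noncomputable def ancestorTime (f : ℝ≥0 → ℝ) (t : ℝ≥0) (a : ℝ) : ℝ≥0 :=
  sSup {r | r ≤ t ∧ f r ≤ a}

lemma ancestorTime_le : ancestorTime f t a ≤ t :=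
  csSup_le' fun _ hr => hr.1

lemma ancestorTime_mono : Monotone (ancestorTime f t) := fun _ _ hab =>
  csSup_le_csSup' ⟨t, fun _ hr => hr.1⟩ fun _ hr => ⟨hr.1, hr.2.trans hab⟩

lemma lt_apply_of_ancestorTime_lt (hr : ancestorTime f t a < r) (hrt : r ≤ t) : a < f r := by
  by_contra! h
  exact hr.not_ge (le_csSup ⟨t, fun _ hr => hr.1⟩ ⟨hrt, h⟩)

lemma apply_ancestorTime (hf : Continuous f) (hf0 : f 0 = 0) (ha : 0 ≤ a) (hat : a ≤ f t) :
    f (ancestorTime f t a) = a := by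
  set S := {r | r ≤ t ∧ f r ≤ a}
  have hS : IsClosed S := (isClosed_le continuous_id continuous_const).inter
    (isClosed_Iic.preimage hf)
  have hmem : ancestorTime f t a ∈ S :=
    hS.csSup_mem ⟨0, zero_le, hf0.trans_le ha⟩ ⟨t, fun _ hr => hr.1⟩
  obtain ⟨y, ⟨hry, hyt⟩, hy⟩ := intermediate_value_Icc hmem.1 hf.continuousOn ⟨hmem.2, hat⟩
  have hyr : y ≤ ancestorTime f t a := le_csSup ⟨t, fun _ hr => hr.1⟩ ⟨hyt, hy.le⟩
  rwa [le_antisymm hyr hry] at hy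

lemma le_apply_of_ancestorTime_le (hf : Continuous f) (hf0 : f 0 = 0) (ha : 0 ≤ a)
    (hat : a ≤ f t) (hr : ancestorTime f t a ≤ r) (hrt : r ≤ t) : a ≤ f r := by
  rcases hr.eq_or_lt with rfl | hr
  · exact (apply_ancestorTime hf hf0 ha hat).ge
  · exact (lt_apply_of_ancestorTime_lt hr hrt).le

lemma csInf_image_Icc_ancestorTime (hf : Continuous f) (hf0 : f 0 = 0) (ha : 0 ≤ a)
    (hat : a ≤ f t) (hx : ancestorTime f t a ≤ x) (hxt : x ≤ t) :
    sInf (f '' Icc (ancestorTime f t a) x) = a := by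
  have hfa := apply_ancestorTime hf hf0 ha hat
  rw [csInf_image_Icc_eq_of_isMinOn ⟨le_rfl, hx⟩ fun y hy => ?_, hfa]
  exact hfa.trans_le (le_apply_of_ancestorTime_le hf hf0 ha hat hy.1 (hy.2.trans hxt))

lemma csInf_image_Icc_min_max_ancestorTime (hf : Continuous f) (hpos : ∀ u, 0 ≤ f u)
    (hf0 : f 0 = 0) (ha : 0 ≤ a) (hat : a ≤ f t) {s : ℝ≥0} (hst : s ≤ t) :
    sInf (f '' Icc (min s (ancestorTime f t a)) (max s (ancestorTime f t a))) =
      min (sInf (f '' Icc s t)) a := by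
  have hbdd : BddBelow (range f) := ⟨0, forall_mem_range.2 hpos⟩
  rcases le_total s (ancestorTime f t a) with hsr | hrs
  · have hle : sInf (f '' Icc s (ancestorTime f t a)) ≤ a :=
      (csInf_image_Icc_le hbdd ⟨hsr, le_rfl⟩).trans_eq (apply_ancestorTime hf hf0 ha hat)
    rw [min_eq_left hsr, max_eq_right hsr, csInf_image_Icc_union hbdd hsr ancestorTime_le,
      csInf_image_Icc_ancestorTime hf hf0 ha hat ancestorTime_le le_rfl, min_eq_left hle,
      min_eq_left hle]
  · have hge : a ≤ sInf (f '' Icc s t) := le_csInf_image_Icc hst fun y hy =>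
      le_apply_of_ancestorTime_le hf hf0 ha hat (hrs.trans hy.1) hy.2
    rw [min_eq_right hrs, max_eq_left hrs, min_eq_right hge,
      csInf_image_Icc_ancestorTime hf hf0 ha hat hrs hst]

end AncestorTime

section StopCut

variable {f : ℝ≥0 → ℝ} {t s u : ℝ≥0}

lemma stopCut_of_le (h : s ≤ t) : stopCut f t s = f s := if_pos h

lemma stopCut_of_lt (h : t < s) : stopCut f t s = max (f t - ((s : ℝ) - t)) 0 :=
  if_neg h.not_ge

lemma stopCut_nonneg (hpos : ∀ u, 0 ≤ f u) (s : ℝ≥0) : 0 ≤ stopCut f t s := by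
  rcases le_or_gt s t with h | h
  · exact (stopCut_of_le h).symm ▸ hpos s
  · exact (stopCut_of_lt h).symm ▸ le_max_right _ _

lemma stopCut_antitoneOn (ht : 0 ≤ f t) : AntitoneOn (stopCut f t) (Ici t) := by
  intro s hs u hu hsu
  have hsu' : (s : ℝ) ≤ u := hsu
  rcases (mem_Ici.1 hs).eq_or_lt with rfl | hs
  · rw [stopCut_of_le le_rfl]
    rcases (mem_Ici.1 hu).eq_or_lt with rfl | hu
    · rw [stopCut_of_le le_rfl]
    · rw [stopCut_of_lt hu]
      exact max_le (by linarith) ht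
  · rw [stopCut_of_lt hs, stopCut_of_lt (hs.trans_le hsu)]
    exact max_le_max (by linarith) le_rfl

lemma stopCut_le_apply (ht : 0 ≤ f t) (hs : t ≤ s) : stopCut f t s ≤ f t :=
  (stopCut_antitoneOn ht self_mem_Ici hs hs).trans_eq (stopCut_of_le le_rfl)

lemma csInf_image_Icc_stopCut_of_le (ht : 0 ≤ f t) (hts : t ≤ s) (hsu : s ≤ u) :
    sInf (stopCut f t '' Icc s u) = stopCut f t u :=
  csInf_image_Icc_eq_of_isMinOn ⟨hsu, le_rfl⟩ fun _ hy =>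
    stopCut_antitoneOn ht (hts.trans hy.1) (hts.trans hsu) hy.2

lemma csInf_image_Icc_stopCut (hpos : ∀ u, 0 ≤ f u) (hst : s ≤ t) (htu : t ≤ u) :
    sInf (stopCut f t '' Icc s u) = min (sInf (f '' Icc s t)) (stopCut f t u) := by
  rw [csInf_image_Icc_union ⟨0, forall_mem_range.2 (stopCut_nonneg hpos)⟩ hst htu,
    csInf_image_Icc_stopCut_of_le (hpos t) le_rfl htu,
    image_congr fun _ hx => stopCut_of_le hx.2]

end StopCut

section ExploredTime

variable {f : ℝ≥0 → ℝ} {t s u : ℝ≥0}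

noncomputable def exploredTime (f : ℝ≥0 → ℝ) (t s : ℝ≥0) : ℝ≥0 :=
  if s ≤ t then s else ancestorTime f t (stopCut f t s)

lemma exploredTime_of_le (h : s ≤ t) : exploredTime f t s = s := if_pos h

lemma exploredTime_of_lt (h : t < s) :
    exploredTime f t s = ancestorTime f t (stopCut f t s) := if_neg h.not_ge

lemma exploredTime_le : exploredTime f t s ≤ t := by
  rcases le_or_gt s t with h | h
  · exact (exploredTime_of_le h).trans_le h
  · exact (exploredTime_of_lt h).trans_le ancestorTime_le

variable (hf : Continuous f) (hpos : ∀ u, 0 ≤ f u) (hf0 : f 0 = 0)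
include hf hpos hf0

lemma apply_exploredTime (s : ℝ≥0) : f (exploredTime f t s) = stopCut f t s := by
  rcases le_or_gt s t with h | h
  · rw [exploredTime_of_le h, stopCut_of_le h]
  · rw [exploredTime_of_lt h, apply_ancestorTime hf hf0 (stopCut_nonneg hpos s)
      (stopCut_le_apply (hpos t) h.le)]

lemma csInf_image_Icc_exploredTime (hsu : s ≤ u) :
    sInf (f '' Icc (min (exploredTime f t s) (exploredTime f t u))
        (max (exploredTime f t s) (exploredTime f t u))) =
      sInf (stopCut f t '' Icc s u) := by
  have hgu := stopCut_nonneg (t := t) hpos u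
  have hgu_le : ∀ {v}, t ≤ v → stopCut f t v ≤ f t := stopCut_le_apply (hpos t)
  rcases le_or_gt u t with hut | htu
  · rw [exploredTime_of_le (hsu.trans hut), exploredTime_of_le hut, min_eq_left hsu,
      max_eq_right hsu, image_congr fun _ hx => stopCut_of_le (hx.2.trans hut)]
  rcases le_or_gt s t with hst | hts
  · rw [exploredTime_of_le hst, exploredTime_of_lt htu, csInf_image_Icc_stopCut hpos hst htu.le,
      csInf_image_Icc_min_max_ancestorTime hf hpos hf0 hgu (hgu_le htu.le) hst]
  · have hanc : ancestorTime f t (stopCut f t u) ≤ ancestorTime f t (stopCut f t s) :=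
      ancestorTime_mono (stopCut_antitoneOn (hpos t) hts.le (hts.trans_le hsu).le hsu)
    rw [exploredTime_of_lt hts, exploredTime_of_lt htu, min_eq_right hanc, max_eq_left hanc,
      csInf_image_Icc_ancestorTime hf hf0 hgu (hgu_le htu.le) hanc ancestorTime_le,
      csInf_image_Icc_stopCut_of_le (hpos t) hts.le hsu]

lemma treeDist_exploredTime (s u : ℝ≥0) :
    treeDist f (exploredTime f t s) (exploredTime f t u) = treeDist (stopCut f t) s u := by
  wlog hsu : s ≤ u generalizing s u
  · rw [treeDist_comm, this u s (le_of_not_ge hsu), treeDist_comm]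
  unfold treeDist
  rw [apply_exploredTime hf hpos hf0, apply_exploredTime hf hpos hf0,
    csInf_image_Icc_exploredTime hf hpos hf0 hsu, min_eq_left hsu, max_eq_right hsu]

end ExploredTime

/-- **The tree coded by `f^{(t)}` is the tree explored up to time `t`**: there is a
root-preserving isometry from the real tree `T_{f^{(t)}}` onto the subtree
`T_f^{(t)} = {p_f s : s ≤ t}` of `T_f`.  This is expressed at the level of times: `φ`
maps times to times `≤ t`, is an isometry from `d_{f^{(t)}}` to `d_f`, preserves the root,
and is surjective onto the classes of times `≤ t`. -/
theorem tree_of_stopped_path_isometric_to_explored_subtree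
    (f : ℝ≥0 → ℝ) (hf : Continuous f) (hpos : ∀ u, 0 ≤ f u) (hf0 : f 0 = 0) (t : ℝ≥0) :
    ∃ φ : ℝ≥0 → ℝ≥0,
      (∀ s, φ s ≤ t) ∧
      (∀ s u, treeDist f (φ s) (φ u) = treeDist (stopCut f t) s u) ∧
      φ 0 = 0 ∧
      (∀ u, u ≤ t → ∃ s, treeDist f (φ s) u = 0) := by
  refine ⟨exploredTime f t, fun _ => exploredTime_le, treeDist_exploredTime hf hpos hf0,
    exploredTime_of_le zero_le, fun u hu => ⟨u, ?_⟩⟩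
  rw [exploredTime_of_le hu, treeDist_self]
end
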